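/- The double series Z(x,y) = Σ_{n,m ≥ 0} C(n+m, n)² xⁿ yᵐ satisfies Z(x,y) = 1/√Δ where Δ = 1 - 2x - 2y - 2xy + x² + y², i.e., as formal power series, (Σ_{n,m} C(n+m,n)² xⁿyᵐ)² · (1 - 2x - 2y - 2xy + x² + y²) = 1. -/

import Mathlib

open PowerSeries

/-- The variable `x`, viewed in `ℚ[[x]][[y]]` (outer variable first). -/
noncomputable def Xv : PowerSeries (PowerSeries ℚ) := PowerSeries.X
/-- The variable `y`, viewed in `ℚ[[x]][[y]]`. -/
noncomputable def Yv : PowerSeries (PowerSeries ℚ) :=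
  PowerSeries.C PowerSeries.X

/-- The staircase festoon generating function
`Z(x,y) = Σ_{n,m≥0} C(n+m,n)² xⁿ yᵐ`. -/
noncomputable def Zfest : PowerSeries (PowerSeries ℚ) :=
  PowerSeries.mk fun n => PowerSeries.mk fun m => ((n + m).choose n : ℚ) ^ 2

/-- `A k = Σ_m C(k+m,k)² X^m`, the coefficient of `x^k` in `Z`. -/
noncomputable def Afest (k : ℕ) : PowerSeries ℚ :=
  PowerSeries.mk fun m => ((k + m).choose k : ℚ) ^ 2

-- the generic numeric identity
lemma festoon_quad (a b : ℕ) :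
    ((a:ℚ)+2) * ((((a+b+4).choose (a+2) : ℚ))^2 - 2*(((a+b+3).choose (a+2) : ℚ))^2
      + (((a+b+2).choose (a+2) : ℚ))^2)
    = (2*(a:ℚ)+3) * ((((a+b+3).choose (a+1) : ℚ))^2 + (((a+b+2).choose (a+1) : ℚ))^2)
      - ((a:ℚ)+1) * (((a+b+2).choose a : ℚ))^2 := by
  rw [show (a+b+4).choose (a+2) = ((a+2)+(b+2)).choose (a+2) from by rw [show a+b+4 = (a+2)+(b+2) from by omega],
      show (a+b+3).choose (a+2) = ((a+2)+(b+1)).choose (a+2) from by rw [show a+b+3 = (a+2)+(b+1) from by omega],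
      show (a+b+2).choose (a+2) = ((a+2)+b).choose (a+2) from by rw [show a+b+2 = (a+2)+b from by omega],
      show (a+b+3).choose (a+1) = ((a+1)+(b+2)).choose (a+1) from by rw [show a+b+3 = (a+1)+(b+2) from by omega],
      show (a+b+2).choose (a+1) = ((a+1)+(b+1)).choose (a+1) from by rw [show a+b+2 = (a+1)+(b+1) from by omega],
      show (a+b+2).choose a = (a+(b+2)).choose a from by rw [show a+b+2 = a+(b+2) from by omega]]
  rw [Nat.cast_add_choose, Nat.cast_add_choose, Nat.cast_add_choose,
      Nat.cast_add_choose, Nat.cast_add_choose, Nat.cast_add_choose]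
  have fne : ∀ n : ℕ, (n.factorial : ℚ) ≠ 0 := fun n => Nat.cast_ne_zero.2 (Nat.factorial_ne_zero n)
  have f1 : (((a+2)+(b+2)).factorial : ℚ)
      = ((a:ℚ)+(b:ℚ)+4)*((a:ℚ)+(b:ℚ)+3)*((a:ℚ)+(b:ℚ)+2)*((a:ℚ)+(b:ℚ)+1)*((a+b).factorial : ℚ) := by
    rw [show (a+2)+(b+2) = (a+b)+1+1+1+1 from by omega]; push_cast [Nat.factorial_succ]; ring
  have f2 : (((a+2)+(b+1)).factorial : ℚ)
      = ((a:ℚ)+(b:ℚ)+3)*((a:ℚ)+(b:ℚ)+2)*((a:ℚ)+(b:ℚ)+1)*((a+b).factorial : ℚ) := by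
    rw [show (a+2)+(b+1) = (a+b)+1+1+1 from by omega]; push_cast [Nat.factorial_succ]; ring
  have f3 : (((a+2)+b).factorial : ℚ)
      = ((a:ℚ)+(b:ℚ)+2)*((a:ℚ)+(b:ℚ)+1)*((a+b).factorial : ℚ) := by
    rw [show (a+2)+b = (a+b)+1+1 from by omega]; push_cast [Nat.factorial_succ]; ring
  have f4 : (((a+1)+(b+2)).factorial : ℚ)
      = ((a:ℚ)+(b:ℚ)+3)*((a:ℚ)+(b:ℚ)+2)*((a:ℚ)+(b:ℚ)+1)*((a+b).factorial : ℚ) := by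
    rw [show (a+1)+(b+2) = (a+b)+1+1+1 from by omega]; push_cast [Nat.factorial_succ]; ring
  have f5 : (((a+1)+(b+1)).factorial : ℚ)
      = ((a:ℚ)+(b:ℚ)+2)*((a:ℚ)+(b:ℚ)+1)*((a+b).factorial : ℚ) := by
    rw [show (a+1)+(b+1) = (a+b)+1+1 from by omega]; push_cast [Nat.factorial_succ]; ring
  have f6 : ((a+(b+2)).factorial : ℚ)
      = ((a:ℚ)+(b:ℚ)+2)*((a:ℚ)+(b:ℚ)+1)*((a+b).factorial : ℚ) := by
    rw [show a+(b+2) = (a+b)+1+1 from by omega]; push_cast [Nat.factorial_succ]; ring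
  have f7 : (((a:ℕ)+2).factorial : ℚ) = ((a:ℚ)+2)*((a:ℚ)+1)*(a.factorial : ℚ) := by
    push_cast [Nat.factorial_succ]; ring
  have f8 : (((a:ℕ)+1).factorial : ℚ) = ((a:ℚ)+1)*(a.factorial : ℚ) := by
    push_cast [Nat.factorial_succ]; ring
  have f9 : (((b:ℕ)+2).factorial : ℚ) = ((b:ℚ)+2)*((b:ℚ)+1)*(b.factorial : ℚ) := by
    push_cast [Nat.factorial_succ]; ring
  have f10 : (((b:ℕ)+1).factorial : ℚ) = ((b:ℚ)+1)*(b.factorial : ℚ) := by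
    push_cast [Nat.factorial_succ]; ring
  rw [f1, f2, f3, f4, f5, f6, f7, f8, f9, f10]
  have h1 : ((a:ℚ)+1) ≠ 0 := by positivity
  have h2 : ((a:ℚ)+2) ≠ 0 := by positivity
  have h3 : ((b:ℚ)+1) ≠ 0 := by positivity
  have h4 : ((b:ℚ)+2) ≠ 0 := by positivity
  field_simp
  ring

/-- The contiguous relation `(1-X)²·(k+1)·A(k+1) = (2k+1)(1+X)·A k − k·A(k−1)`. -/
lemma keyA (k : ℕ) :
    (1 - 2*X + X^2) * ((((k:ℕ) : PowerSeries ℚ) + 1) * Afest (k+1))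
      = (2*((k:ℕ) : PowerSeries ℚ) + 1) * ((1 + X) * Afest k)
        - ((k:ℕ) : PowerSeries ℚ) * Afest (k-1) := by
  have hk : ((k:ℕ) : PowerSeries ℚ) = C (k:ℚ) := (map_natCast (C) k).symm
  rw [hk]
  have hL : (1 - 2*X + X^2) * ((C (k:ℚ) + 1) * Afest (k+1))
      = C ((k:ℚ)+1) * Afest (k+1) - C (2*((k:ℚ)+1)) * (X * Afest (k+1))
        + C ((k:ℚ)+1) * (X * (X * Afest (k+1))) := by
    rw [map_add, map_mul, map_add, map_one, map_ofNat]; ring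
  have hR : (2 * C (k:ℚ) + 1) * ((1 + X) * Afest k) - C (k:ℚ) * Afest (k-1)
      = C (2*(k:ℚ)+1) * Afest k + C (2*(k:ℚ)+1) * (X * Afest k)
        - C (k:ℚ) * Afest (k-1) := by
    rw [map_add, map_mul, map_one, map_ofNat]; ring
  rw [hL, hR]
  set e1 : ℚ := (k:ℚ)+1 with he1
  set e2 : ℚ := 2*((k:ℚ)+1) with he2
  set e3 : ℚ := 2*(k:ℚ)+1 with he3
  set e0 : ℚ := (k:ℚ) with he0
  ext m
  simp only [map_add, map_sub, coeff_C_mul]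
  rcases m with _ | _ | b
  · -- m = 0
    rw [coeff_zero_X_mul, coeff_zero_X_mul, coeff_zero_X_mul]
    simp only [Afest, coeff_mk, Nat.add_zero, Nat.choose_self, he1, he3, he0]
    push_cast; ring
  · -- m = 1
    rw [show (1:ℕ) = 0 + 1 from rfl, coeff_succ_X_mul, coeff_succ_X_mul,
      coeff_succ_X_mul, coeff_zero_X_mul]
    simp only [Afest, coeff_mk, Nat.add_zero, Nat.choose_self, he1, he2, he3, he0]
    rcases k with _ | a
    · norm_num
    · rw [show a + 1 + 1 + 1 = (a+2)+1 from by omega, Nat.choose_succ_self_right,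
         show a + 1 + 1 = (a+1)+1 from by omega, Nat.choose_succ_self_right,
         show a + 1 - 1 = a from by omega, Nat.choose_succ_self_right]
      push_cast; ring
  · -- m = b + 2
    simp only [coeff_succ_X_mul]
    simp only [Afest, coeff_mk, he1, he2, he3, he0]
    rcases k with _ | a
    · rw [show 0 + 1 + (b+1+1) = (b+2)+1 from by omega,
         show 0 + 1 + (b+1) = (b+1)+1 from by omega,
         show 0 + 1 + b = b+1 from by omega,
         show (0:ℕ) - 1 = 0 from rfl]
      simp only [Nat.choose_one_right, Nat.zero_add, Nat.choose_zero_right]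
      push_cast; ring
    · rw [show a + 1 + 1 + (b+1+1) = a+b+4 from by omega,
         show a + 1 + 1 + (b+1) = a+b+3 from by omega,
         show a + 1 + 1 + b = a+b+2 from by omega,
         show a + 1 + (b+1+1) = a+b+3 from by omega,
         show a + 1 + (b+1) = a+b+2 from by omega,
         show a + 1 - 1 = a from by omega,
         show a + (b+1+1) = a+b+2 from by omega,
         show a + 1 + 1 = a + 2 from by omega]
      have := festoon_quad a b
      push_cast at this ⊢
      linarith [this]

lemma Dmul (f g : PowerSeries (PowerSeries ℚ)) :
    d⁄dX (PowerSeries ℚ) (f*g)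
      = f * (d⁄dX (PowerSeries ℚ) g) + g * (d⁄dX (PowerSeries ℚ) f) := by
  show derivativeFun _ = _
  rw [derivativeFun_mul]
  simp only [smul_eq_mul]
  rfl

lemma Done : d⁄dX (PowerSeries ℚ) (1 : PowerSeries (PowerSeries ℚ)) = 0 := by
  show derivativeFun _ = _
  exact derivativeFun_one

lemma Dadd (f g : PowerSeries (PowerSeries ℚ)) :
    d⁄dX (PowerSeries ℚ) (f+g) = d⁄dX (PowerSeries ℚ) f + d⁄dX (PowerSeries ℚ) g := by
  show derivativeFun _ = _
  exact derivativeFun_add f g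

lemma Dsub (f g : PowerSeries (PowerSeries ℚ)) :
    d⁄dX (PowerSeries ℚ) (f-g) = d⁄dX (PowerSeries ℚ) f - d⁄dX (PowerSeries ℚ) g := by
  have hh : ∀ h : PowerSeries (PowerSeries ℚ), d⁄dX (PowerSeries ℚ) h = derivativeFun h :=
    fun _ => rfl
  rw [hh, hh, hh]
  ext n : 1
  simp only [← hh, coeff_derivative, map_sub, sub_mul]

lemma coeff_Zfest (n : ℕ) : coeff n Zfest = Afest n := by
  rw [Zfest, coeff_mk]; rfl

/-- The key differential relation `Δ · ∂Z/∂x = (1 + y - x) · Z`. -/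
lemma main_rel :
    (1 - 2*Xv - 2*Yv - 2*Xv*Yv + Xv^2 + Yv^2) * (d⁄dX (PowerSeries ℚ) Zfest)
      = (1 + Yv - Xv) * Zfest := by
  set a0 : PowerSeries ℚ := 1 - 2*X + X^2 with ha0
  set a1 : PowerSeries ℚ := 2 + 2*X with ha1
  set b0 : PowerSeries ℚ := 1 + X with hb0
  have hΔ : (1 - 2*Xv - 2*Yv - 2*Xv*Yv + Xv^2 + Yv^2 : PowerSeries (PowerSeries ℚ))
      = C a0 - C a1 * Xv + Xv * Xv := by
    rw [ha0, ha1]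
    simp only [map_add, map_sub, map_mul, map_one, map_ofNat, map_pow, Yv]
    ring
  have hb : (1 + Yv - Xv : PowerSeries (PowerSeries ℚ)) = C b0 - Xv := by
    rw [hb0]; simp only [map_add, map_one, Yv]
  rw [hΔ, hb]
  have hL : (C a0 - C a1 * Xv + Xv*Xv) * (d⁄dX (PowerSeries ℚ) Zfest)
      = C a0 * d⁄dX (PowerSeries ℚ) Zfest
        - C a1 * (Xv * d⁄dX (PowerSeries ℚ) Zfest)
        + Xv * (Xv * d⁄dX (PowerSeries ℚ) Zfest) := by ring
  have hR : (C b0 - Xv) * Zfest = C b0 * Zfest - Xv * Zfest := by ring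
  rw [hL, hR]
  ext n : 1
  simp only [map_add, map_sub, coeff_C_mul, Xv]
  rcases n with _ | _ | n
  · -- n = 0
    rw [coeff_zero_X_mul, coeff_zero_X_mul, coeff_zero_X_mul]
    rw [coeff_derivative, coeff_Zfest, coeff_Zfest]
    have h := keyA 0
    rw [← ha0, ← hb0] at h
    push_cast at h ⊢
    linear_combination h
  · -- n = 1
    rw [show (1:ℕ) = 0 + 1 from rfl, coeff_succ_X_mul, coeff_succ_X_mul,
      coeff_succ_X_mul, coeff_zero_X_mul]
    rw [coeff_derivative, coeff_derivative, coeff_Zfest, coeff_Zfest, coeff_Zfest]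
    have h := keyA 1
    rw [← ha0, ← hb0] at h
    push_cast at h ⊢
    linear_combination h
  · -- n = m + 2
    simp only [coeff_succ_X_mul]
    rw [coeff_derivative, coeff_derivative, coeff_derivative]
    simp only [coeff_Zfest]
    have h := keyA (n+2)
    rw [← ha0, ← hb0, show n+2+1 = n+1+1+1 from by omega,
      show n+2-1 = n+1 from by omega] at h
    push_cast at h ⊢
    linear_combination h

/-- `Z(x,y)² · Δ(x,y) = 1` where `Δ = 1 - 2x - 2y - 2xy + x² + y²`,
i.e. `Z = 1/√Δ` as a formal power series identity. -/
theorem festoon_sq_mul_delta :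
    Zfest ^ 2 * (1 - 2 * Xv - 2 * Yv - 2 * Xv * Yv + Xv ^ 2 + Yv ^ 2) = 1 := by
  haveI : CharZero (PowerSeries ℚ) := by
    constructor
    intro a b h
    have := congrArg (constantCoeff) h
    simpa using this
  set a0 : PowerSeries ℚ := 1 - 2*X + X^2 with ha0
  set a1 : PowerSeries ℚ := 2 + 2*X with ha1
  set b0 : PowerSeries ℚ := 1 + X with hb0
  have hΔ : (1 - 2*Xv - 2*Yv - 2*Xv*Yv + Xv^2 + Yv^2 : PowerSeries (PowerSeries ℚ))
      = C a0 - C a1 * Xv + Xv * Xv := by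
    rw [ha0, ha1]
    simp only [map_add, map_sub, map_mul, map_one, map_ofNat, map_pow, Yv]
    ring
  have hmain : (C a0 - C a1 * Xv + Xv * Xv) * (d⁄dX (PowerSeries ℚ) Zfest)
      = (C b0 - Xv) * Zfest := by
    rw [← hΔ]
    have h := main_rel
    rw [show (1 + Yv - Xv : PowerSeries (PowerSeries ℚ)) = C b0 - Xv from by
      rw [hb0]; simp only [map_add, map_one, Yv]] at h
    convert h using 2
  rw [show (1 - 2 * Xv - 2 * Yv - 2 * Xv * Yv + Xv ^ 2 + Yv ^ 2
      : PowerSeries (PowerSeries ℚ)) = 1 - 2*Xv - 2*Yv - 2*Xv*Yv + Xv^2 + Yv^2 from by ring,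
    hΔ]
  apply derivative.ext
  · -- derivatives agree
    have hDΔ : d⁄dX (PowerSeries ℚ) (C a0 - C a1 * Xv + Xv * Xv)
        = - C a1 + 2 * Xv := by
      rw [Dadd, Dsub, Dmul, Dmul]
      simp only [Xv, derivative_C, derivative_X]
      ring
    have hC2 : C a1 = 2 * C b0 := by
      rw [ha1, hb0]
      simp only [map_add, map_mul, map_one, map_ofNat]
      ring
    rw [Dmul, pow_two, Dmul, hDΔ, Done]
    linear_combination (2*Zfest) * hmain - Zfest^2 * hC2
  · -- constant coefficients agree
    rw [map_mul, map_pow, map_one]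
    have hZ0 : constantCoeff Zfest = Afest 0 := by
      rw [← coeff_zero_eq_constantCoeff, coeff_Zfest]
    have hΔ0 : constantCoeff (C a0 - C a1 * Xv + Xv * Xv) = a0 := by
      simp [Xv]
    rw [hZ0, hΔ0]
    have h10 : Afest 0 * (1 - X) = 1 := by
      have he : Afest 0 * (1 - X) = Afest 0 - X * Afest 0 := by ring
      rw [he]
      ext m
      rcases m with _ | m
      · simp [Afest, coeff_zero_X_mul]
      · simp [Afest, coeff_succ_X_mul, coeff_one]
    have hsq : Afest 0 ^ 2 * a0 = (Afest 0 * (1 - X)) ^ 2 := by rw [ha0]; ring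
    rw [hsq, h10, one_pow]
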